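/- Removing adjacent matching parenthesis pairs preserves Dyck edit distance: if X-hat is obtained from X by iteratively deleting every occurrence of an opening parenthesis immediately followed by a matching closing parenthesis of the same type, then ded_d(X-hat) = ded_d(X). -/
import Mathlib


/-- A parenthesis character: `true` = opening, `false` = closing; the second
component is the type of the parenthesis. -/
abbrev Paren := Bool × ℕ

/-- The Dyck language of well-balanced typed parenthesis strings. -/
inductive Dyck : List Paren → Prop where
  | nil : Dyck []
  | wrap {Y : List Paren} (t : ℕ) : Dyck Y → Dyck ((true, t) :: (Y ++ [(false, t)]))
  | app {Y Z : List Paren} : Dyck Y → Dyck Z → Dyck (Y ++ Z)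

/-- Deletion-only Dyck edit distance. -/
noncomputable def dedDel (X : List Paren) : ℕ :=
  sInf {d | ∃ Y : List Paren, Y.Sublist X ∧ Dyck Y ∧ d = X.length - Y.length}

/-- One reduction step: remove an adjacent pair consisting of an opening parenthesis
immediately followed by a closing parenthesis of the same type. -/
def RemStep (X Y : List Paren) : Prop :=
  ∃ u v t, X = u ++ (true, t) :: (false, t) :: v ∧ Y = u ++ v

lemma concat_inj' {α : Type*} {l l' : List α} {x y : α} (h : l ++ [x] = l' ++ [y]) :
    l = l' ∧ x = y := by
  have := List.append_inj' h (by simp)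
  exact ⟨this.1, by simpa using this.2⟩

/-- A Dyck word does not start with a closing parenthesis. -/
lemma dyck_head {Y : List Paren} (h : Dyck Y) :
    ∀ t b, Y ≠ (false, t) :: b := by
  induction h with
  | nil => intro t b hb; simp at hb
  | wrap s hY ih => intro t b hb; simp at hb
  | app hY hZ ihY ihZ =>
    intro t b hb
    rename_i Y Z
    cases Y with
    | nil => exact ihZ t b (by simpa using hb)
    | cons y ys =>
      simp only [List.cons_append, List.cons.injEq] at hb
      exact ihY t ys (by rw [hb.1])

/-- A Dyck word does not end with an opening parenthesis. -/
lemma dyck_last {Y : List Paren} (h : Dyck Y) :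
    ∀ t a, Y ≠ a ++ [(true, t)] := by
  induction h with
  | nil => intro t a hb; simp at hb
  | wrap s hY ih =>
    intro t a hb
    rename_i Y
    have hb' : ((true, s) :: Y) ++ [(false, s)] = a ++ [(true, t)] := by simpa using hb
    have := (concat_inj' hb').2
    simp at this
  | app hY hZ ihY ihZ =>
    intro t a hb
    rename_i Y Z
    rcases List.eq_nil_or_concat Z with rfl | ⟨Z', x, rfl⟩
    · exact ihY t a (by simpa using hb)
    · have hb' : (Y ++ Z') ++ [x] = a ++ [(true, t)] := by simpa using hb
      have hx := (concat_inj' hb').2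
      exact ihZ t Z' (by simp [hx])

/-- Inserting an adjacent matching pair preserves Dyck. -/
lemma dyck_insert {W : List Paren} (h : Dyck W) :
    ∀ a b t, W = a ++ b → Dyck (a ++ (true, t) :: (false, t) :: b) := by
  induction h with
  | nil =>
    intro a b t hab
    obtain ⟨rfl, rfl⟩ := List.append_eq_nil_iff.mp hab.symm
    simpa using Dyck.wrap t Dyck.nil
  | wrap s hY ih =>
    intro a b t hab
    rename_i Y
    cases a with
    | nil =>
      simp only [List.nil_append] at hab ⊢
      have hpair : Dyck [(true, t), (false, t)] := by simpa using Dyck.wrap t Dyck.nil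
      have := Dyck.app hpair (hab ▸ Dyck.wrap s hY)
      simpa using this
    | cons x a' =>
      simp only [List.cons_append, List.cons.injEq] at hab
      obtain ⟨rfl, hab⟩ := hab
      rcases List.eq_nil_or_concat b with rfl | ⟨b', y, rfl⟩
      · -- b = [], so a' = Y ++ [(false,s)] : insert pair at the very end
        simp only [List.append_nil] at hab
        have hW : Dyck ((true, s) :: (Y ++ [(false, s)])) := Dyck.wrap s hY
        have hpair : Dyck [(true, t), (false, t)] := by simpa using Dyck.wrap t Dyck.nil
        have := Dyck.app hW hpair
        simpa [← hab] using this
      · have hab' : Y ++ [(false, s)] = (a' ++ b') ++ [y] := by simpa using hab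
        obtain ⟨hY2, hy⟩ := concat_inj' hab'
        have hd := ih a' b' t hY2
        have := Dyck.wrap s hd
        subst hy
        simpa using this
  | app hY hZ ihY ihZ =>
    intro a b t hab
    rename_i Y Z
    rcases List.append_eq_append_iff.mp hab with ⟨k, hk1, hk2⟩ | ⟨k, hk1, hk2⟩
    · -- a = Y ++ k, Z = k ++ b
      subst hk1
      have := Dyck.app hY (ihZ k b t hk2)
      simpa using this
    · -- Y = a ++ k, b = k ++ Z
      subst hk2
      have := Dyck.app (ihY a k t hk1) hZ
      simpa using this

/-- Removing an adjacent matching pair preserves Dyck. -/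
lemma dyck_remove_adj {W : List Paren} (h : Dyck W) :
    ∀ a b t, W = a ++ (true, t) :: (false, t) :: b → Dyck (a ++ b) := by
  induction h with
  | nil => intro a b t hab; simp at hab
  | wrap s hY ih =>
    intro a b t hab
    rename_i Y
    cases a with
    | nil =>
      simp only [List.nil_append, List.cons.injEq] at hab
      obtain ⟨hst, hab⟩ := hab
      cases Y with
      | nil =>
        simp only [List.nil_append, List.cons.injEq] at hab
        rw [← hab.2]; exact Dyck.nil
      | cons y ys =>
        exfalso
        simp only [List.cons_append, List.cons.injEq] at hab
        exact dyck_head hY t ys (by rw [hab.1])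
    | cons x a' =>
      simp only [List.cons_append, List.cons.injEq] at hab
      obtain ⟨rfl, hab⟩ := hab
      rcases List.eq_nil_or_concat b with rfl | ⟨b', y, rfl⟩
      · exfalso
        have hab' : Y ++ [(false, s)] = (a' ++ [(true, t)]) ++ [(false, t)] := by
          simpa using hab
        exact dyck_last hY t a' (concat_inj' hab').1
      · have hab' : Y ++ [(false, s)] = (a' ++ (true, t) :: (false, t) :: b') ++ [y] := by
          simpa using hab
        obtain ⟨hY2, hy⟩ := concat_inj' hab'
        have hd := ih a' b' t hY2
        have := Dyck.wrap s hd
        subst hy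
        simpa using this
  | app hY hZ ihY ihZ =>
    intro a b t hab
    rename_i Y Z
    rcases List.append_eq_append_iff.mp hab with ⟨k, hk1, hk2⟩ | ⟨k, hk1, hk2⟩
    · -- a = Y ++ k, Z = k ++ pattern
      subst hk1
      have := Dyck.app hY (ihZ k b t hk2)
      simpa using this
    · -- Y = a ++ k, pattern = k ++ Z
      cases k with
      | nil =>
        simp only [List.append_nil] at hk1
        subst hk1
        have := Dyck.app hY (ihZ [] b t (by simpa using hk2.symm))
        simpa using this
      | cons x k' =>
        simp only [List.cons_append, List.cons.injEq] at hk2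
        obtain ⟨hx, hk2⟩ := hk2
        subst hx
        cases k' with
        | nil =>
          exact absurd hk1 (dyck_last hY t a)
        | cons x' k'' =>
          simp only [List.cons_append, List.cons.injEq] at hk2
          obtain ⟨hx', hk2⟩ := hk2
          subst hx'
          subst hk1
          have hd := ihY a k'' t rfl
          have := Dyck.app hd hZ
          rw [show a ++ b = a ++ (k'' ++ Z) by rw [hk2]]
          simpa using this

/-- Removing an opening parenthesis together with some matching closing
parenthesis after it preserves Dyck. -/
lemma dyck_remove_open {W : List Paren} (h : Dyck W) :
    ∀ A B t, W = A ++ (true, t) :: B →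
      ∃ B', B'.Sublist B ∧ B.length = B'.length + 1 ∧ Dyck (A ++ B') := by
  induction h with
  | nil => intro A B t hab; simp at hab
  | wrap s hY ih =>
    intro A B t hab
    rename_i Y
    cases A with
    | nil =>
      simp only [List.nil_append, List.cons.injEq] at hab
      obtain ⟨-, hB⟩ := hab
      refine ⟨Y, ?_, by simp [← hB], by simpa using hY⟩
      rw [← hB]; exact List.sublist_append_left _ _
    | cons x A' =>
      simp only [List.cons_append, List.cons.injEq] at hab
      obtain ⟨rfl, hab⟩ := hab
      rcases List.eq_nil_or_concat B with rfl | ⟨B'', y, rfl⟩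
      · exfalso
        have hab' : Y ++ [(false, s)] = A' ++ [(true, t)] := by simpa using hab
        have := (concat_inj' hab').2
        simp at this
      · have hab' : Y ++ [(false, s)] = (A' ++ (true, t) :: B'') ++ [y] := by simpa using hab
        obtain ⟨hY2, hy⟩ := concat_inj' hab'
        obtain ⟨k, hk, hlen, hd⟩ := ih A' B'' t hY2
        refine ⟨k ++ [(false, s)], ?_, by simp [hlen], ?_⟩
        · subst hy; simpa using hk.append (List.Sublist.refl [(false, s)])
        · have := Dyck.wrap s hd
          simpa using this
  | app hY hZ ihY ihZ =>
    intro A B t hab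
    rename_i Y Z
    rcases List.append_eq_append_iff.mp hab with ⟨k, hk1, hk2⟩ | ⟨k, hk1, hk2⟩
    · -- A = Y ++ k, Z = k ++ (true,t) :: B
      subst hk1
      obtain ⟨k', hk', hlen, hd⟩ := ihZ k B t hk2
      exact ⟨k', hk', hlen, by simpa using Dyck.app hY hd⟩
    · -- Y = A ++ k, (true,t) :: B = k ++ Z
      cases k with
      | nil =>
        simp only [List.append_nil] at hk1
        subst hk1
        obtain ⟨k', hk', hlen, hd⟩ := ihZ [] B t (by simpa using hk2.symm)
        exact ⟨k', hk', hlen, by simpa using Dyck.app hY (by simpa using hd)⟩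
      | cons x k' =>
        simp only [List.cons_append, List.cons.injEq] at hk2
        obtain ⟨hx, hk2⟩ := hk2
        subst hx
        subst hk1
        obtain ⟨k'', hk'', hlen, hd⟩ := ihY A k' t rfl
        refine ⟨k'' ++ Z, ?_, ?_, by simpa using Dyck.app hd hZ⟩
        · rw [hk2]; exact hk''.append (List.Sublist.refl Z)
        · rw [hk2]; simp [hlen]; omega

/-- Removing a closing parenthesis together with some matching opening
parenthesis before it preserves Dyck. -/
lemma dyck_remove_close {W : List Paren} (h : Dyck W) :
    ∀ A B t, W = A ++ (false, t) :: B →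
      ∃ A', A'.Sublist A ∧ A.length = A'.length + 1 ∧ Dyck (A' ++ B) := by
  induction h with
  | nil => intro A B t hab; simp at hab
  | wrap s hY ih =>
    intro A B t hab
    rename_i Y
    cases A with
    | nil =>
      exfalso
      simp only [List.nil_append, List.cons.injEq] at hab
      have := hab.1
      simp at this
    | cons x A' =>
      simp only [List.cons_append, List.cons.injEq] at hab
      obtain ⟨rfl, hab⟩ := hab
      rcases List.eq_nil_or_concat B with rfl | ⟨B'', y, rfl⟩
      · -- Y ++ [(false,s)] = A' ++ [(false,t)], so Y = A'
        have hab' : Y ++ [(false, s)] = A' ++ [(false, t)] := by simpa using hab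
        have h2 := concat_inj' hab'
        refine ⟨Y, ?_, by simp [h2.1], by simpa using hY⟩
        rw [h2.1]; exact List.sublist_cons_self _ _
      · have hab' : Y ++ [(false, s)] = (A' ++ (false, t) :: B'') ++ [y] := by simpa using hab
        obtain ⟨hY2, hy⟩ := concat_inj' hab'
        obtain ⟨k, hk, hlen, hd⟩ := ih A' B'' t hY2
        refine ⟨(true, s) :: k, hk.cons₂ _, by simp [hlen], ?_⟩
        subst hy
        have := Dyck.wrap s hd
        simpa using this
  | app hY hZ ihY ihZ =>
    intro A B t hab
    rename_i Y Z
    rcases List.append_eq_append_iff.mp hab with ⟨k, hk1, hk2⟩ | ⟨k, hk1, hk2⟩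
    · -- A = Y ++ k, Z = k ++ (false,t) :: B
      subst hk1
      obtain ⟨k', hk', hlen, hd⟩ := ihZ k B t hk2
      exact ⟨Y ++ k', hk'.append_left Y, by simp [hlen]; omega, by simpa using Dyck.app hY hd⟩
    · -- Y = A ++ k, (false,t) :: B = k ++ Z
      cases k with
      | nil =>
        simp only [List.append_nil] at hk1
        subst hk1
        obtain ⟨k', hk', hlen, hd⟩ := ihZ [] B t (by simpa using hk2.symm)
        exact absurd hlen (by simp)
      | cons x k' =>
        simp only [List.cons_append, List.cons.injEq] at hk2
        obtain ⟨hx, hk2⟩ := hk2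
        subst hx
        subst hk1
        obtain ⟨k'', hk'', hlen, hd⟩ := ihY A k' t rfl
        refine ⟨k'', hk'', hlen, ?_⟩
        rw [show B = k' ++ Z from hk2]
        have := Dyck.app hd hZ
        simpa using this

lemma dedDel_set_nonempty (X : List Paren) :
    {d | ∃ Y : List Paren, Y.Sublist X ∧ Dyck Y ∧ d = X.length - Y.length}.Nonempty :=
  ⟨X.length, [], List.nil_sublist X, Dyck.nil, by simp⟩

lemma remStep_dedDel {X Y : List Paren} (h : RemStep X Y) : dedDel X = dedDel Y := by
  obtain ⟨u, v, t, rfl, rfl⟩ := h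
  apply le_antisymm
  · -- dedDel (u ++ pair :: v) ≤ dedDel (u ++ v)
    obtain ⟨W, hsub, hD, heq⟩ := Nat.sInf_mem (dedDel_set_nonempty (u ++ v))
    obtain ⟨w1, w2, rfl, h1, h2⟩ := List.sublist_append_iff.mp hsub
    have hD' : Dyck (w1 ++ (true, t) :: (false, t) :: w2) := dyck_insert hD w1 w2 t rfl
    have hsub' : (w1 ++ (true, t) :: (false, t) :: w2).Sublist
        (u ++ (true, t) :: (false, t) :: v) :=
      h1.append ((h2.cons₂ _).cons₂ _)
    have hle := Nat.sInf_le (s := {d | ∃ Y : List Paren,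
        Y.Sublist (u ++ (true, t) :: (false, t) :: v) ∧ Dyck Y ∧
        d = (u ++ (true, t) :: (false, t) :: v).length - Y.length})
      ⟨_, hsub', hD', rfl⟩
    refine hle.trans ?_
    rw [dedDel, heq]
    simp only [List.length_append, List.length_cons]
    omega
  · -- dedDel (u ++ v) ≤ dedDel (u ++ pair :: v)
    obtain ⟨W, hsub, hD, heq⟩ := Nat.sInf_mem
      (dedDel_set_nonempty (u ++ (true, t) :: (false, t) :: v))
    obtain ⟨w1, w2, rfl, h1, h2⟩ := List.sublist_append_iff.mp hsub
    have key : ∃ W' : List Paren, W'.Sublist (u ++ v) ∧ Dyck W' ∧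
        (w1 ++ w2).length ≤ W'.length + 2 := by
      rcases List.sublist_cons_iff.mp h2 with h2' | ⟨r, rfl, hr⟩
      · rcases List.sublist_cons_iff.mp h2' with h2'' | ⟨r, rfl, hr⟩
        · exact ⟨w1 ++ w2, h1.append h2'', hD, by omega⟩
        · obtain ⟨A', hA', hlen, hd⟩ := dyck_remove_close hD w1 r t rfl
          refine ⟨A' ++ r, (hA'.trans h1).append hr, hd, ?_⟩
          simp only [List.length_append, List.length_cons]
          omega
      · rcases List.sublist_cons_iff.mp hr with hr' | ⟨r', rfl, hr'⟩
        · obtain ⟨B', hB', hlen, hd⟩ := dyck_remove_open hD w1 r t rfl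
          refine ⟨w1 ++ B', h1.append (hB'.trans hr'), hd, ?_⟩
          simp only [List.length_append, List.length_cons]
          omega
        · have hd : Dyck (w1 ++ r') := dyck_remove_adj hD w1 r' t rfl
          refine ⟨w1 ++ r', h1.append hr', hd, ?_⟩
          simp only [List.length_append, List.length_cons]
          omega
    obtain ⟨W', hsub', hD', hlen'⟩ := key
    have hle := Nat.sInf_le (s := {d | ∃ Y : List Paren,
        Y.Sublist (u ++ v) ∧ Dyck Y ∧ d = (u ++ v).length - Y.length})
      ⟨_, hsub', hD', rfl⟩
    refine hle.trans ?_
    rw [dedDel, heq]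
    have hW'le : W'.length ≤ (u ++ v).length := hsub'.length_le
    simp only [List.length_append, List.length_cons] at *
    omega

/-- Removing adjacent matching parenthesis pairs preserves the deletion-only Dyck
edit distance: if `X-hat` is obtained from `X` by iteratively deleting adjacent
matching pairs until none remain, then `ded_d(X-hat) = ded_d(X)`. -/
theorem stmt18 (X Y : List Paren)
    (h : Relation.ReflTransGen RemStep X Y)
    (hred : ¬∃ Z, RemStep Y Z) :
    dedDel Y = dedDel X := by
  clear hred
  induction h with
  | refl => rfl
  | tail hXb hstep ih => rw [← remStep_dedDel hstep, ih]
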